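/- (Integral identity for the x_1 coefficient in the bridge ODE solution, equation (33) of the paper.) For 0 < t ≤ s < 1, ∫_s^t g(τ)²/(α_τ² σ_τ σ̄_τ³) dτ = (2/σ_1²)·( σ_t/σ̄_t − σ_s/σ̄_s ). -/

import Mathlib

/-!
Write `A = σ²` and `B = σ̄²`. Then `A' = -B' = g²/α²` and `A + B = σ₁²`, so the quotient rule gives
`(√A / √B)' = (g²/α²) σ₁² / (2 √A √B³)`, and the identity is the fundamental theorem of calculus for
this antiderivative; being a nonnegative derivative, the integrand is automatically integrable.
-/

open MeasureTheory intervalIntegral Set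

/-- Scaling coefficient `α_t = exp(∫_0^t f)`. -/
noncomputable def alpha (f : ℝ → ℝ) (t : ℝ) : ℝ := Real.exp (∫ τ in (0:ℝ)..t, f τ)

/-- Accumulated variance `σ_t² = ∫_0^t g²/α²`. -/
noncomputable def sigmaSq (f g : ℝ → ℝ) (t : ℝ) : ℝ :=
  ∫ τ in (0:ℝ)..t, (g τ)^2 / (alpha f τ)^2

/-- Reverse accumulated variance `σ̄_t² = ∫_t^1 g²/α²`. -/
noncomputable def sigmaBarSq (f g : ℝ → ℝ) (t : ℝ) : ℝ :=
  ∫ τ in t..(1:ℝ), (g τ)^2 / (alpha f τ)^2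

noncomputable def varianceRate (f g : ℝ → ℝ) (τ : ℝ) : ℝ := g τ ^ 2 / alpha f τ ^ 2

lemma alpha_pos (f : ℝ → ℝ) (t : ℝ) : 0 < alpha f t := Real.exp_pos _

lemma continuousOn_alpha {f : ℝ → ℝ} (hf : ContinuousOn f (Icc 0 1)) :
    ContinuousOn (alpha f) (Icc 0 1) := by
  have hprim := continuousOn_primitive_interval (μ := volume)
    (a := 0) (b := 1) (by rw [uIcc_of_le zero_le_one]; exact hf.integrableOn_Icc)
  rw [uIcc_of_le zero_le_one] at hprim
  exact Real.continuous_exp.comp_continuousOn hprim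

lemma continuousOn_varianceRate {f g : ℝ → ℝ} (hf : ContinuousOn f (Icc 0 1))
    (hg : ContinuousOn g (Icc 0 1)) : ContinuousOn (varianceRate f g) (Icc 0 1) :=
  (hg.pow 2).div ((continuousOn_alpha hf).pow 2) fun τ _ => (pow_pos (alpha_pos f τ) 2).ne'

lemma varianceRate_pos (f : ℝ → ℝ) {g : ℝ → ℝ} {τ : ℝ} (hgτ : 0 < g τ) :
    0 < varianceRate f g τ :=
  div_pos (pow_pos hgτ 2) (pow_pos (alpha_pos f τ) 2)

lemma HasDerivAt.sqrt_div_sqrt_of_neg {A B : ℝ → ℝ} {a x : ℝ} (hA : HasDerivAt A a x)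
    (hB : HasDerivAt B (-a) x) (hA0 : 0 < A x) (hB0 : 0 < B x) :
    HasDerivAt (fun y => √(A y) / √(B y)) (a * (A x + B x) / (2 * √(A x) * √(B x) ^ 3)) x := by
  have hsA : 0 < √(A x) := Real.sqrt_pos.2 hA0
  have hsB : 0 < √(B x) := Real.sqrt_pos.2 hB0
  refine ((hA.sqrt hA0.ne').div (hB.sqrt hB0.ne') hsB.ne').congr_deriv ?_
  rw [show A x + B x = √(A x) ^ 2 + √(B x) ^ 2 by rw [Real.sq_sqrt hA0.le, Real.sq_sqrt hB0.le]]
  field_simp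
  ring

section Density

variable {h : ℝ → ℝ}

lemma ContinuousOn.intervalIntegrable_of_mem_Icc (hc : ContinuousOn h (Icc 0 1)) {a b : ℝ}
    (ha : a ∈ Icc (0 : ℝ) 1) (hb : b ∈ Icc (0 : ℝ) 1) : IntervalIntegrable h volume a b :=
  (hc.mono (uIcc_subset_Icc ha hb)).intervalIntegrable

/-- With `A τ = ∫₀^τ h` and `B τ = ∫_τ^1 h`, the identity `A + B = ∫₀¹ h` makes the quotient rule
collapse to `h / (√A √B³)`. -/
lemma hasDerivAt_sqrt_integral_div_sqrt_integral (hc : ContinuousOn h (Icc 0 1))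
    (hpos : ∀ τ ∈ Icc (0 : ℝ) 1, 0 < h τ) {τ : ℝ} (hτ : τ ∈ Ioo (0 : ℝ) 1) :
    HasDerivAt
      (fun x => 2 / (∫ y in (0 : ℝ)..1, h y) * (√(∫ y in (0 : ℝ)..x, h y) / √(∫ y in x..1, h y)))
      (h τ / (√(∫ y in (0 : ℝ)..τ, h y) * √(∫ y in τ..1, h y) ^ 3)) τ := by
  have hτIcc : τ ∈ Icc (0 : ℝ) 1 := Ioo_subset_Icc_self hτ
  have h0 : (0 : ℝ) ∈ Icc (0 : ℝ) 1 := left_mem_Icc.2 zero_le_one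
  have h1 : (1 : ℝ) ∈ Icc (0 : ℝ) 1 := right_mem_Icc.2 zero_le_one
  have hnhds : Icc (0 : ℝ) 1 ∈ nhds τ := Icc_mem_nhds hτ.1 hτ.2
  have hcτ : ContinuousAt h τ := hc.continuousAt hnhds
  have hmeas : StronglyMeasurableAtFilter h (nhds τ) volume :=
    ⟨Icc 0 1, hnhds, hc.aestronglyMeasurable measurableSet_Icc⟩
  have hA := integral_hasDerivAt_right (hc.intervalIntegrable_of_mem_Icc h0 hτIcc) hmeas hcτ
  have hB := integral_hasDerivAt_left (hc.intervalIntegrable_of_mem_Icc hτIcc h1) hmeas hcτ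
  have hA0 : 0 < ∫ y in (0 : ℝ)..τ, h y := intervalIntegral_pos_of_pos_on
    (hc.intervalIntegrable_of_mem_Icc h0 hτIcc)
    (fun x hx => hpos x ⟨hx.1.le, hx.2.le.trans hτ.2.le⟩) hτ.1
  have hB0 : 0 < ∫ y in τ..1, h y := intervalIntegral_pos_of_pos_on
    (hc.intervalIntegrable_of_mem_Icc hτIcc h1)
    (fun x hx => hpos x ⟨hτ.1.le.trans hx.1.le, hx.2.le⟩) hτ.2
  have hsum : (∫ y in (0 : ℝ)..τ, h y) + ∫ y in τ..1, h y = ∫ y in (0 : ℝ)..1, h y :=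
    integral_add_adjacent_intervals (hc.intervalIntegrable_of_mem_Icc h0 hτIcc)
      (hc.intervalIntegrable_of_mem_Icc hτIcc h1)
  refine ((hA.sqrt_div_sqrt_of_neg hB hA0 hB0).const_mul
    (2 / ∫ y in (0 : ℝ)..1, h y)).congr_deriv ?_
  rw [hsum]
  field_simp [(hsum ▸ add_pos hA0 hB0 : 0 < ∫ y in (0 : ℝ)..1, h y).ne']

end Density

/-- Integral identity for the `x₁` coefficient in the bridge ODE solution (equation (33)):
`∫_s^t g²/(α² σ σ̄³) dτ = (2/σ₁²)(σ_t/σ̄_t − σ_s/σ̄_s)` for `0 < t ≤ s < 1`. -/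
theorem bridge_ode_x1_integral_identity
    (f g : ℝ → ℝ)
    (hf : ContinuousOn f (Set.Icc 0 1)) (hg : ContinuousOn g (Set.Icc 0 1))
    (hgpos : ∀ t ∈ Set.Icc (0:ℝ) 1, 0 < g t)
    (s t : ℝ) (ht : 0 < t) (hts : t ≤ s) (hs : s < 1) :
    (∫ τ in s..t, (g τ)^2 /
        ((alpha f τ)^2 * Real.sqrt (sigmaSq f g τ) * Real.sqrt (sigmaBarSq f g τ)^3))
      = (2 / sigmaSq f g 1) *
          (Real.sqrt (sigmaSq f g t) / Real.sqrt (sigmaBarSq f g t)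
            - Real.sqrt (sigmaSq f g s) / Real.sqrt (sigmaBarSq f g s)) := by
  have hderiv : ∀ τ ∈ uIcc s t, HasDerivAt
      (fun x => 2 / sigmaSq f g 1 * (√(sigmaSq f g x) / √(sigmaBarSq f g x)))
      ((g τ)^2 / ((alpha f τ)^2 * √(sigmaSq f g τ) * √(sigmaBarSq f g τ)^3)) τ := by
    intro τ hτ
    rw [uIcc_of_ge hts] at hτ
    have hrate := hasDerivAt_sqrt_integral_div_sqrt_integral (continuousOn_varianceRate hf hg)
      (fun x hx => varianceRate_pos f (hgpos x hx)) ⟨ht.trans_le hτ.1, hτ.2.trans_lt hs⟩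
    rwa [varianceRate, div_div, ← mul_assoc] at hrate
  have hint := intervalIntegrable_deriv_of_nonneg (HasDerivAt.continuousOn hderiv)
    (fun x hx => hderiv x (Ioo_subset_Icc_self hx)) (fun x _ => by positivity)
  rw [mul_sub]
  exact integral_eq_sub_of_hasDerivAt hderiv hint
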